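/- arXiv:2202.01908 — 8 statements merged into one kernel-verified Lean document; each statement's English description precedes it below -/
import Mathlib

section
/- The column space (range) of the matrix M = Q g Q equals the null space of J; that is, Range(Q g Q) = Null(J). -/
/-!
`Q` is the symmetric projection onto `ker J`, so `Q g Q = Qᴴ g Q` and `range Q = ker J`. For
positive definite `g`, `Aᴴ g A` has the same kernel as `A` because `(A v)ᴴ g (A v) > 0` whenever
`A v ≠ 0`; hence it has the rank of `A`, which is that of `Aᴴ`, and its range, contained in
`range Aᴴ`, is all of it.
-/

open Matrix

namespace Matrix

variable {m n R : Type*} [Fintype m] [Fintype n]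

section PosDef

theorem PosDef.ker_conjTranspose_mul_mul_same [CommRing R] [PartialOrder R] [StarRing R]
    {g : Matrix n n R} (hg : g.PosDef) (A : Matrix n m R) :
    LinearMap.ker (Aᴴ * g * A).mulVecLin = LinearMap.ker A.mulVecLin := by
  ext v
  simp only [LinearMap.mem_ker, mulVecLin_apply]
  refine ⟨fun h => ?_, fun h => by rw [← mulVec_mulVec, h, mulVec_zero]⟩
  by_contra hAv
  have hpos := hg.dotProduct_mulVec_pos hAv
  rw [star_mulVec, ← dotProduct_mulVec, mulVec_mulVec, mulVec_mulVec, h,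
    dotProduct_zero] at hpos
  exact lt_irrefl 0 hpos

variable [Field R] [PartialOrder R] [StarRing R] {g : Matrix n n R}

theorem PosDef.rank_conjTranspose_mul_mul_same (hg : g.PosDef) (A : Matrix n m R) :
    (Aᴴ * g * A).rank = A.rank := by
  refine add_left_injective (Module.finrank R (LinearMap.ker A.mulVecLin)) ?_
  dsimp only [rank]
  rw [LinearMap.finrank_range_add_finrank_ker A.mulVecLin, ← hg.ker_conjTranspose_mul_mul_same A,
    LinearMap.finrank_range_add_finrank_ker]

variable [StarOrderedRing R] in
theorem PosDef.range_conjTranspose_mul_mul_same (hg : g.PosDef) (A : Matrix n m R) :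
    LinearMap.range (Aᴴ * g * A).mulVecLin = LinearMap.range Aᴴ.mulVecLin := by
  refine Submodule.eq_of_le_of_finrank_eq ?_ ?_
  · rw [Matrix.mul_assoc, mulVecLin_mul]
    exact LinearMap.range_comp_le_range _ _
  · change (Aᴴ * g * A).rank = Aᴴ.rank
    rw [hg.rank_conjTranspose_mul_mul_same, rank_conjTranspose]

end PosDef

section KerProj

variable [CommRing R] [DecidableEq m] [DecidableEq n]

/-- The orthogonal projection onto the null space of `A` when `A * Aᵀ` is invertible (for real `A`:
full row rank); otherwise `(A * Aᵀ)⁻¹` is the junk value `0` and this is just `1`. -/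
noncomputable def kerProj (A : Matrix m n R) : Matrix n n R := 1 - Aᵀ * (A * Aᵀ)⁻¹ * A

theorem transpose_kerProj (A : Matrix m n R) : (kerProj A)ᵀ = kerProj A := by
  simp only [kerProj, transpose_sub, transpose_one, transpose_mul, transpose_nonsing_inv,
    transpose_transpose, Matrix.mul_assoc]

variable {A : Matrix m n R}

theorem mul_kerProj (hA : IsUnit (A * Aᵀ).det) : A * kerProj A = 0 := by
  rw [kerProj, Matrix.mul_sub, Matrix.mul_one, ← Matrix.mul_assoc, ← Matrix.mul_assoc,
    mul_nonsing_inv _ hA, Matrix.one_mul, sub_self]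

theorem kerProj_mulVec_of_mulVec_eq_zero {v : n → R} (hv : A *ᵥ v = 0) :
    kerProj A *ᵥ v = v := by
  rw [kerProj, sub_mulVec, one_mulVec, ← mulVec_mulVec, hv, mulVec_zero, sub_zero]

theorem range_kerProj (hA : IsUnit (A * Aᵀ).det) :
    LinearMap.range (kerProj A).mulVecLin = LinearMap.ker A.mulVecLin := by
  refine le_antisymm ?_ fun v hv => ⟨v, kerProj_mulVec_of_mulVec_eq_zero hv⟩
  rintro _ ⟨v, rfl⟩
  simp only [LinearMap.mem_ker, mulVecLin_apply, mulVec_mulVec, mul_kerProj hA, zero_mulVec]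

end KerProj

end Matrix

theorem range_QgQ_eq_null_J_general {n m : ℕ}
    (J : Matrix (Fin m) (Fin n) ℝ)
    (g : Matrix (Fin n) (Fin n) ℝ) (hg : g.PosDef)
    (hJJ : IsUnit (J * Jᵀ).det)
    (Q : Matrix (Fin n) (Fin n) ℝ)
    (hQ : Q = 1 - Jᵀ * (J * Jᵀ)⁻¹ * J) :
    LinearMap.range (Q * g * Q).mulVecLin = LinearMap.ker J.mulVecLin := by
  change Q = kerProj J at hQ
  have hQH : Qᴴ = Q := by rw [conjTranspose_eq_transpose_of_trivial, hQ, transpose_kerProj]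
  calc LinearMap.range (Q * g * Q).mulVecLin
      = LinearMap.range (Qᴴ * g * Q).mulVecLin := by rw [hQH]
    _ = LinearMap.range Qᴴ.mulVecLin := hg.range_conjTranspose_mul_mul_same Q
    _ = LinearMap.ker J.mulVecLin := by rw [hQH, hQ, range_kerProj hJJ]

/-- The column space (range) of `M = Q g Q` equals the null space of `J`. -/
theorem range_QgQ_eq_null_J {n m : ℕ} (hm : 0 < m) (hmn : m < n)
    (J : Matrix (Fin m) (Fin n) ℝ) (hJ : J.rank = m)
    (g : Matrix (Fin n) (Fin n) ℝ) (hg : g.PosDef)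
    (hJJ : IsUnit (J * Jᵀ).det)
    (Q : Matrix (Fin n) (Fin n) ℝ)
    (hQ : Q = 1 - Jᵀ * (J * Jᵀ)⁻¹ * J) :
    LinearMap.range (Q * g * Q).mulVecLin = LinearMap.ker J.mulVecLin :=
  range_QgQ_eq_null_J_general J g hg hJJ Q hQ
end

section
/- The matrix N is the Moore–Penrose pseudo-inverse of M = Q g Q; explicitly, N satisfies the four Penrose conditions M N M = M, N M N = N, (M N)ᵀ = M N, and (N M)ᵀ = N M. Moreover J N = 0 (so J M† u = 0 for every vector u ∈ ℝⁿ). -/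
/-!
Both `Q` and `N` are instances of `W - W Jᵀ (J W Jᵀ)⁻¹ J W` (for `W = 1` and `W = g⁻¹`),
which is symmetric, is annihilated by `J`, and, multiplied on the right by `W⁻¹`, fixes every
matrix annihilated by `J`. Hence `Q` is the orthogonal projection onto `ker J`, `Q N = N Q = N` and
`N g Q = Q`, so `N M = M N = Q`; the Penrose conditions reduce to `Q` being a symmetric
projection fixing `M` and `N`.
-/

open Matrix

namespace Matrix

variable {R ι κ : Type*} [CommRing R] [Fintype ι] [Fintype κ] [DecidableEq κ]

/-- The upper-left block of the inverse of the KKT matrix `[[W⁻¹, Jᵀ], [J, 0]]`. -/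
noncomputable def constrainedInverse (J : Matrix κ ι R) (W : Matrix ι ι R) : Matrix ι ι R :=
  W - W * Jᵀ * (J * W * Jᵀ)⁻¹ * J * W

variable {J : Matrix κ ι R} {W : Matrix ι ι R}

theorem mul_constrainedInverse (hK : IsUnit (J * W * Jᵀ).det) :
    J * constrainedInverse J W = 0 := by
  have hcancel : J * (W * Jᵀ * (J * W * Jᵀ)⁻¹ * J * W) = J * W := by
    simp only [← Matrix.mul_assoc, mul_nonsing_inv _ hK, Matrix.one_mul]
  rw [constrainedInverse, Matrix.mul_sub, hcancel, sub_self]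

theorem isSymm_constrainedInverse (hW : W.IsSymm) : (constrainedInverse J W).IsSymm := by
  simp only [IsSymm, constrainedInverse, transpose_sub, transpose_mul, transpose_transpose,
    transpose_nonsing_inv, hW.eq, Matrix.mul_assoc]

theorem constrainedInverse_mul_mul_of_mul_eq_zero [DecidableEq ι] {V X : Matrix ι ι R}
    (hWV : W * V = 1) (hX : J * X = 0) : constrainedInverse J W * V * X = X := by
  simp only [constrainedInverse, Matrix.sub_mul, Matrix.mul_assoc, hWV, Matrix.mul_one,
    Matrix.one_mul]
  simp only [← Matrix.mul_assoc, hX, Matrix.mul_zero, sub_zero]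

end Matrix

theorem N_isPseudoInverse_of_QgQ_general {n m : ℕ}
    (J : Matrix (Fin m) (Fin n) ℝ)
    (g : Matrix (Fin n) (Fin n) ℝ) (hg : g.PosDef)
    (hJJ : IsUnit (J * Jᵀ).det) (hJgJ : IsUnit (J * g⁻¹ * Jᵀ).det)
    (Q : Matrix (Fin n) (Fin n) ℝ)
    (hQ : Q = 1 - Jᵀ * (J * Jᵀ)⁻¹ * J)
    (M N : Matrix (Fin n) (Fin n) ℝ)
    (hM : M = Q * g * Q)
    (hN : N = g⁻¹ - g⁻¹ * Jᵀ * (J * g⁻¹ * Jᵀ)⁻¹ * J * g⁻¹) :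
    M * N * M = M ∧ N * M * N = N ∧ (M * N)ᵀ = M * N ∧ (N * M)ᵀ = N * M ∧
      J * N = 0 ∧ ∀ u : Fin n → ℝ, J *ᵥ (N *ᵥ u) = 0 := by
  have hgU : IsUnit g.det := (isUnit_iff_isUnit_det g).mp hg.isUnit
  have hgS : g.IsSymm := isHermitian_iff_isSymm.mp hg.isHermitian
  have hQ' : Q = constrainedInverse J 1 := by simpa [constrainedInverse] using hQ
  have hN' : N = constrainedInverse J g⁻¹ := hN
  have hJQ : J * Q = 0 := hQ' ▸ mul_constrainedInverse (by simpa using hJJ)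
  have hJN : J * N = 0 := hN' ▸ mul_constrainedInverse hJgJ
  have hQS : Q.IsSymm := hQ' ▸ isSymm_constrainedInverse isSymm_one
  have hNS : N.IsSymm := hN' ▸ isSymm_constrainedInverse hgS.inv
  have hQfix {X : Matrix (Fin n) (Fin n) ℝ} (hX : J * X = 0) : Q * X = X := by
    simpa [← hQ'] using constrainedInverse_mul_mul_of_mul_eq_zero (Matrix.mul_one 1) hX
  have hNgQ : N * g * Q = Q :=
    hN' ▸ constrainedInverse_mul_mul_of_mul_eq_zero (nonsing_inv_mul g hgU) hJQ
  have hNQ : N * Q = N := by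
    simpa only [transpose_mul, hQS.eq, hNS.eq] using congrArg transpose (hQfix hJN)
  have hNM : N * M = Q := by rw [hM, ← Matrix.mul_assoc, ← Matrix.mul_assoc, hNQ, hNgQ]
  have hMN : M * N = Q := by
    have hMS : M.IsSymm := by
      rw [hM, IsSymm, transpose_mul, transpose_mul, hQS.eq, hgS.eq, Matrix.mul_assoc]
    simpa only [transpose_mul, hQS.eq, hNS.eq, hMS.eq] using congrArg transpose hNM
  refine ⟨?_, ?_, ?_, ?_, hJN, fun u ↦ by rw [mulVec_mulVec, hJN, zero_mulVec]⟩
  · rw [hMN, hM, ← Matrix.mul_assoc, ← Matrix.mul_assoc, hQfix hJQ]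
  · rw [hNM, hQfix hJN]
  · rw [hMN, hQS.eq]
  · rw [hNM, hQS.eq]

/-- `N` is the Moore–Penrose pseudo-inverse of `M = Q g Q`: it satisfies the four Penrose
conditions `M N M = M`, `N M N = N`, `(M N)ᵀ = M N`, `(N M)ᵀ = N M`; moreover `J N = 0`,
so `J (M† u) = 0` for every vector `u`. -/
theorem N_isPseudoInverse_of_QgQ {n m : ℕ} (hm : 0 < m) (hmn : m < n)
    (J : Matrix (Fin m) (Fin n) ℝ) (hJ : J.rank = m)
    (g : Matrix (Fin n) (Fin n) ℝ) (hg : g.PosDef)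
    (hJJ : IsUnit (J * Jᵀ).det) (hJgJ : IsUnit (J * g⁻¹ * Jᵀ).det)
    (Q : Matrix (Fin n) (Fin n) ℝ)
    (hQ : Q = 1 - Jᵀ * (J * Jᵀ)⁻¹ * J)
    (M N : Matrix (Fin n) (Fin n) ℝ)
    (hM : M = Q * g * Q)
    (hN : N = g⁻¹ - g⁻¹ * Jᵀ * (J * g⁻¹ * Jᵀ)⁻¹ * J * g⁻¹) :
    M * N * M = M ∧ N * M * N = N ∧ (M * N)ᵀ = M * N ∧ (N * M)ᵀ = N * M ∧
      J * N = 0 ∧ ∀ u : Fin n → ℝ, J *ᵥ (N *ᵥ u) = 0 :=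
  N_isPseudoInverse_of_QgQ_general J g hg hJJ hJgJ Q hQ M N hM hN
end

section
/- The pseudo-determinant of M = Q g Q satisfies pdet(Q g Q) = det(g) · det(J g⁻¹ Jᵀ) / det(J Jᵀ). Equivalently, log pdet(M) = log det g + log det(J g⁻¹ Jᵀ) − log det(J Jᵀ). -/
open Matrix

/-- The pseudo-determinant of a real symmetric matrix: the product of its nonzero
eigenvalues (counted with multiplicity), the empty product being `1`. -/
noncomputable def pdet {n : ℕ} {S : Matrix (Fin n) (Fin n) ℝ} (hS : S.IsHermitian) : ℝ :=
  ∏ i, if hS.eigenvalues i = 0 then 1 else hS.eigenvalues i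

/-!
On an eigenbasis of the symmetric matrix `S = Q g Q`, the matrix `S + (1 - Q)` acts as `S` on
eigenvectors with nonzero eigenvalue (they lie in the range of `Q`) and as the identity on
`ker S`, which equals `ker Q` because `g` is positive definite. Hence
`pdet S = det (Q g Q + 1 - Q)`. Since `Q = 1 - K J` is idempotent with `K = Jᵀ (J Jᵀ)⁻¹` a right
inverse of `J`, Sylvester's identity `det (1 + A B) = det (1 + B A)` turns this into
`det g · det (J g⁻¹ K) = det g · det (J g⁻¹ Jᵀ) / det (J Jᵀ)`.
-/

namespace Matrix

variable {n m : Type*} [Fintype n] [Fintype m]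

theorem PosDef.mulVec_eq_zero_of_conjTranspose_mul_mul {R : Type*} [CommRing R] [PartialOrder R]
    [StarRing R] {g : Matrix n n R} (hg : g.PosDef) {B : Matrix n m R} {u : m → R}
    (h : (Bᴴ * g * B) *ᵥ u = 0) : B *ᵥ u = 0 := by
  by_contra hBu
  have hpos := hg.dotProduct_mulVec_pos hBu
  rwa [star_mulVec, ← dotProduct_mulVec, mulVec_mulVec, mulVec_mulVec, h, dotProduct_zero,
    lt_self_iff_false] at hpos

variable [DecidableEq n] [DecidableEq m] {R : Type*} [CommRing R]

theorem det_eq_prod_of_mulVec_col_eq_smul {A U : Matrix n n R} (hU : IsUnit U.det) {c : n → R}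
    (h : ∀ j, A *ᵥ U.col j = c j • U.col j) : A.det = ∏ j, c j := by
  have hAU : A * U = U * diagonal c := ext_of_mulVec_single fun j => by
    rw [← mulVec_mulVec, ← mulVec_mulVec, mulVec_single_one, h, mulVec_single_one]
    simp
  have := congrArg det hAU
  rw [det_mul, det_mul, det_diagonal, mul_comm] at this
  exact hU.mul_left_cancel this

theorem isIdempotentElem_one_sub_mul_of_mul_eq_one {J : Matrix m n R} {K : Matrix n m R}
    (hJK : J * K = 1) : IsIdempotentElem (1 - K * J) :=
  IsIdempotentElem.one_sub <| by
    rw [IsIdempotentElem, Matrix.mul_assoc, ← Matrix.mul_assoc J, hJK, Matrix.one_mul]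

theorem det_mul_mul_add_one_sub_of_isIdempotentElem {Q : Matrix n n R} (hQ : IsIdempotentElem Q)
    (g : Matrix n n R) : (Q * g * Q + (1 - Q)).det = (g * Q + (1 - Q)).det :=
  calc (Q * g * Q + (1 - Q)).det = (1 + Q * (g - 1) * Q).det := by
        congr 1; rw [mul_sub, sub_mul, mul_one, hQ.eq]; abel
    _ = (1 + Q * (Q * (g - 1))).det := det_one_add_mul_comm _ _
    _ = (1 + Q * (g - 1)).det := by rw [← mul_assoc, hQ.eq]
    _ = (1 + (g - 1) * Q).det := det_one_add_mul_comm _ _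
    _ = (g * Q + (1 - Q)).det := by congr 1; rw [sub_mul, one_mul]; abel

theorem det_mul_one_sub_add_of_mul_eq_one {g : Matrix n n R} (hg : IsUnit g.det)
    {J : Matrix m n R} {K : Matrix n m R} (hJK : J * K = 1) :
    (g * (1 - K * J) + K * J).det = g.det * (J * g⁻¹ * K).det := by
  have hfac : g * (1 - K * J) + K * J = g * (1 + (g⁻¹ - 1) * (K * J)) := by
    simp only [mul_add, mul_sub, sub_mul, ← mul_assoc, mul_nonsing_inv g hg, mul_one, one_mul]
    abel
  have hsmall : 1 + J * ((g⁻¹ - 1) * K) = J * g⁻¹ * K := by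
    rw [Matrix.sub_mul, Matrix.mul_sub, Matrix.one_mul, hJK, ← Matrix.mul_assoc]
    abel
  rw [hfac, det_mul, ← Matrix.mul_assoc, det_one_add_mul_comm, hsmall]

theorem IsHermitian.mulVec_eigenvectorBasis_add_one_sub {S P : Matrix n n ℝ} (hS : S.IsHermitian)
    (hPS : P * S = S) (hker : ∀ u, S *ᵥ u = 0 → P *ᵥ u = 0) (j : n) :
    (S + (1 - P)) *ᵥ hS.eigenvectorBasis j =
      (if hS.eigenvalues j = 0 then 1 else hS.eigenvalues j) • hS.eigenvectorBasis j := by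
  set v := ⇑(hS.eigenvectorBasis j)
  have hSv : S *ᵥ v = hS.eigenvalues j • v := hS.mulVec_eigenvectorBasis j
  rw [add_mulVec, sub_mulVec, one_mulVec]
  split_ifs with h
  · rw [hker v (by rw [hSv, h, zero_smul]), hSv, h, zero_smul, one_smul, sub_zero, zero_add]
  · have hPv : P *ᵥ v = v := by
      have := congrArg (· *ᵥ v) hPS
      simp only [← mulVec_mulVec, hSv, mulVec_smul] at this
      exact smul_right_injective _ h this
    rw [hPv, hSv]
    abel

end Matrix

theorem pdet_eq_det_add_one_sub {N : ℕ} {S P : Matrix (Fin N) (Fin N) ℝ} (hS : S.IsHermitian)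
    (hPS : P * S = S) (hker : ∀ u, S *ᵥ u = 0 → P *ᵥ u = 0) :
    pdet hS = (S + (1 - P)).det :=
  (det_eq_prod_of_mulVec_col_eq_smul (UnitaryGroup.det_isUnit hS.eigenvectorUnitary)
    (hS.mulVec_eigenvectorBasis_add_one_sub hPS hker)).symm

theorem pdet_QgQ_general {n m : ℕ}
    (J : Matrix (Fin m) (Fin n) ℝ)
    (g : Matrix (Fin n) (Fin n) ℝ) (hg : g.PosDef)
    (hJJ : IsUnit (J * Jᵀ).det) (hJgJ : IsUnit (J * g⁻¹ * Jᵀ).det)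
    (Q : Matrix (Fin n) (Fin n) ℝ)
    (hQ : Q = 1 - Jᵀ * (J * Jᵀ)⁻¹ * J)
    (hM : (Q * g * Q).IsHermitian) :
    pdet hM = g.det * (J * g⁻¹ * Jᵀ).det / (J * Jᵀ).det ∧
      Real.log (pdet hM) =
        Real.log g.det + Real.log (J * g⁻¹ * Jᵀ).det - Real.log (J * Jᵀ).det := by
  have hJK : J * (Jᵀ * (J * Jᵀ)⁻¹) = 1 := by rw [← Matrix.mul_assoc, mul_nonsing_inv _ hJJ]
  have hQ_idem : IsIdempotentElem Q := hQ ▸ isIdempotentElem_one_sub_mul_of_mul_eq_one hJK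
  have hQ_symm : Qᴴ = Q := by simp [hQ, transpose_nonsing_inv, Matrix.mul_assoc]
  have hgd : IsUnit g.det := hg.isUnit.map detMonoidHom
  have hker : ∀ u, (Q * g * Q) *ᵥ u = 0 → Q *ᵥ u = 0 := fun _ hu =>
    hg.mulVec_eq_zero_of_conjTranspose_mul_mul (hQ_symm.symm ▸ hu)
  have hpdet : pdet hM = g.det * (J * g⁻¹ * Jᵀ).det / (J * Jᵀ).det :=
    calc pdet hM = (Q * g * Q + (1 - Q)).det :=
          pdet_eq_det_add_one_sub hM (by rw [← mul_assoc, ← mul_assoc, hQ_idem.eq]) hker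
      _ = (g * Q + (1 - Q)).det := det_mul_mul_add_one_sub_of_isIdempotentElem hQ_idem g
      _ = g.det * (J * g⁻¹ * (Jᵀ * (J * Jᵀ)⁻¹)).det := by
          rw [hQ, sub_sub_cancel, det_mul_one_sub_add_of_mul_eq_one hgd hJK]
      _ = g.det * (J * g⁻¹ * Jᵀ).det / (J * Jᵀ).det := by
          rw [← Matrix.mul_assoc, det_mul, det_nonsing_inv, Ring.inverse_eq_inv', div_eq_mul_inv,
            mul_assoc]
  refine ⟨hpdet, ?_⟩
  rw [hpdet, Real.log_div (mul_ne_zero hgd.ne_zero hJgJ.ne_zero) hJJ.ne_zero,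
    Real.log_mul hgd.ne_zero hJgJ.ne_zero]

/-- `pdet (Q g Q) = det g · det (J g⁻¹ Jᵀ) / det (J Jᵀ)`; equivalently,
`log pdet (Q g Q) = log det g + log det (J g⁻¹ Jᵀ) − log det (J Jᵀ)`. -/
theorem pdet_QgQ {n m : ℕ} (hm : 0 < m) (hmn : m < n)
    (J : Matrix (Fin m) (Fin n) ℝ) (hJ : J.rank = m)
    (g : Matrix (Fin n) (Fin n) ℝ) (hg : g.PosDef)
    (hJJ : IsUnit (J * Jᵀ).det) (hJgJ : IsUnit (J * g⁻¹ * Jᵀ).det)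
    (Q : Matrix (Fin n) (Fin n) ℝ)
    (hQ : Q = 1 - Jᵀ * (J * Jᵀ)⁻¹ * J)
    (hM : (Q * g * Q).IsHermitian) :
    pdet hM = g.det * (J * g⁻¹ * Jᵀ).det / (J * Jᵀ).det ∧
      Real.log (pdet hM) =
        Real.log g.det + Real.log (J * g⁻¹ * Jᵀ).det - Real.log (J * Jᵀ).det :=
  pdet_QgQ_general J g hg hJJ hJgJ Q hQ hM
end

section
/- The pseudo-determinant of M = Q g Q equals the determinant of M padded by the complementary projection: pdet(Q g Q) = det(Q g Q + (I − Q)) = det(Q g Q + Jᵀ(J Jᵀ)⁻¹J). -/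
open Matrix

/-! In an orthonormal eigenbasis of `M = Q g Q`, the padding `1 - Q` kills the eigenvectors with
nonzero eigenvalue, because `(1 - Q) M = 0`, and fixes those with eigenvalue zero, because
`ker M = ker Q` by positive definiteness of `g`. So `M + (1 - Q)` is diagonal in that basis, with the
nonzero eigenvalues of `M` and otherwise `1` on the diagonal. -/

namespace Matrix

section Projection

variable {m n : Type*} [Fintype m] [Fintype n] [DecidableEq m] (J : Matrix m n ℝ)

lemma isIdempotentElem_transpose_mul_inv_mul (hJ : IsUnit (J * Jᵀ).det) :
    IsIdempotentElem (Jᵀ * (J * Jᵀ)⁻¹ * J) := by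
  calc Jᵀ * (J * Jᵀ)⁻¹ * J * (Jᵀ * (J * Jᵀ)⁻¹ * J)
      = Jᵀ * ((J * Jᵀ)⁻¹ * (J * Jᵀ)) * (J * Jᵀ)⁻¹ * J := by simp only [Matrix.mul_assoc]
    _ = Jᵀ * (J * Jᵀ)⁻¹ * J := by rw [nonsing_inv_mul _ hJ, Matrix.mul_one]

lemma isHermitian_transpose_mul_inv_mul : (Jᵀ * (J * Jᵀ)⁻¹ * J).IsHermitian := by
  simpa only [conjTranspose_eq_transpose_of_trivial] using
    isHermitian_conjTranspose_mul_mul J (isHermitian_mul_conjTranspose_self J).inv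

end Projection

open scoped ComplexOrder in
lemma PosDef.conjTranspose_mul_mul_mulVec_eq_zero_iff {𝕜 m n : Type*} [RCLike 𝕜] [Fintype m]
    [Fintype n] {g : Matrix n n 𝕜} (hg : g.PosDef) (B : Matrix n m 𝕜) (v : m → 𝕜) :
    (Bᴴ * g * B) *ᵥ v = 0 ↔ B *ᵥ v = 0 := by
  refine ⟨fun h => ?_, fun h => by rw [← mulVec_mulVec, h, mulVec_zero]⟩
  by_contra hBv
  have hpos : 0 < star v ⬝ᵥ (Bᴴ * g * B) *ᵥ v := by
    simpa only [star_mulVec, dotProduct_mulVec, vecMul_vecMul] using hg.dotProduct_mulVec_pos hBv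
  rw [h, dotProduct_zero] at hpos
  exact hpos.false

namespace IsHermitian

variable {n : ℕ} {A P : Matrix (Fin n) (Fin n) ℝ} (hA : A.IsHermitian)

lemma add_mulVec_eigenvectorBasis (hPA : P * A = 0) (hker : ∀ v, A *ᵥ v = 0 → P *ᵥ v = v)
    (j : Fin n) :
    (A + P) *ᵥ ⇑(hA.eigenvectorBasis j) =
      (if hA.eigenvalues j = 0 then 1 else hA.eigenvalues j) • ⇑(hA.eigenvectorBasis j) := by
  have hAv := hA.mulVec_eigenvectorBasis j
  split_ifs with h
  · rw [h, zero_smul] at hAv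
    rw [add_mulVec, hAv, hker _ hAv, zero_add, one_smul]
  · have hPv : P *ᵥ (A *ᵥ ⇑(hA.eigenvectorBasis j)) = 0 := by
      rw [mulVec_mulVec, hPA, zero_mulVec]
    rw [hAv, mulVec_smul, smul_eq_zero] at hPv
    rw [add_mulVec, hAv, hPv.resolve_left h, add_zero]

theorem det_add_eq_pdet (hPA : P * A = 0) (hker : ∀ v, A *ᵥ v = 0 → P *ᵥ v = v) :
    (A + P).det = pdet hA := by
  set U : Matrix (Fin n) (Fin n) ℝ := ↑hA.eigenvectorUnitary
  set c : Fin n → ℝ := fun i => if hA.eigenvalues i = 0 then 1 else hA.eigenvalues i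
  have hU : IsUnit U := Unitary.isUnit_coe
  have hdiag : (A + P) * U = U * diagonal c := ext_of_mulVec_single fun j => by
    rw [← mulVec_mulVec, ← mulVec_mulVec, eigenvectorUnitary_mulVec,
      add_mulVec_eigenvectorBasis hA hPA hker, diagonal_mulVec_single, ← smul_eq_mul,
      Pi.single_smul', mulVec_smul, eigenvectorUnitary_mulVec]
  have hconj : A + P = U * diagonal c * U⁻¹ := by
    rw [← hdiag, Matrix.mul_assoc, mul_nonsing_inv _ ((isUnit_iff_isUnit_det U).1 hU),
      Matrix.mul_one]
  rw [hconj, det_conj hU, det_diagonal]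
  rfl

end IsHermitian

end Matrix

theorem pdet_QgQ_eq_det_padded_general {n m : ℕ}
    (J : Matrix (Fin m) (Fin n) ℝ)
    (g : Matrix (Fin n) (Fin n) ℝ) (hg : g.PosDef)
    (hJJ : IsUnit (J * Jᵀ).det)
    (Q : Matrix (Fin n) (Fin n) ℝ)
    (hQ : Q = 1 - Jᵀ * (J * Jᵀ)⁻¹ * J)
    (hM : (Q * g * Q).IsHermitian) :
    pdet hM = (Q * g * Q + (1 - Q)).det ∧
      pdet hM = (Q * g * Q + Jᵀ * (J * Jᵀ)⁻¹ * J).det := by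
  have hQ_idem : IsIdempotentElem Q := hQ ▸ (isIdempotentElem_transpose_mul_inv_mul J hJJ).one_sub
  have hQ_herm : Q.IsHermitian := hQ ▸ isHermitian_one.sub (isHermitian_transpose_mul_inv_mul J)
  have hcompl : (1 - Q) * (Q * g * Q) = 0 := by
    rw [← Matrix.mul_assoc, ← Matrix.mul_assoc, hQ_idem.one_sub_mul_self, Matrix.zero_mul,
      Matrix.zero_mul]
  have hker (v) (hv : (Q * g * Q) *ᵥ v = 0) : (1 - Q) *ᵥ v = v := by
    have hQv := (hg.conjTranspose_mul_mul_mulVec_eq_zero_iff Q v).1 (by rwa [hQ_herm.eq])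
    rw [sub_mulVec, one_mulVec, hQv, sub_zero]
  have hpad := hM.det_add_eq_pdet hcompl hker
  refine ⟨hpad.symm, ?_⟩
  rw [show Jᵀ * (J * Jᵀ)⁻¹ * J = 1 - Q by rw [hQ, sub_sub_cancel], hpad]

/-- `pdet (Q g Q) = det (Q g Q + (I − Q)) = det (Q g Q + Jᵀ (J Jᵀ)⁻¹ J)`:
the pseudo-determinant equals the determinant of `M` padded by the complementary
projection. -/
theorem pdet_QgQ_eq_det_padded {n m : ℕ} (hm : 0 < m) (hmn : m < n)
    (J : Matrix (Fin m) (Fin n) ℝ) (hJ : J.rank = m)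
    (g : Matrix (Fin n) (Fin n) ℝ) (hg : g.PosDef)
    (hJJ : IsUnit (J * Jᵀ).det)
    (Q : Matrix (Fin n) (Fin n) ℝ)
    (hQ : Q = 1 - Jᵀ * (J * Jᵀ)⁻¹ * J)
    (hM : (Q * g * Q).IsHermitian) :
    pdet hM = (Q * g * Q + (1 - Q)).det ∧
      pdet hM = (Q * g * Q + Jᵀ * (J * Jᵀ)⁻¹ * J).det :=
  pdet_QgQ_eq_det_padded_general J g hg hJJ Q hQ hM
end

section
/- The matrix Q g Q + (I − Q) is invertible with inverse (Q g Q + (I − Q))⁻¹ = N + (I − Q). -/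
open Matrix

/-! If `Q` is idempotent, `Q N = N` and `Q g N = Q`, then expanding the product gives
`(Q g Q + (1 - Q)) (N + (1 - Q)) = Q g N + (1 - Q) N + (1 - Q) = 1`, and a one-sided inverse of a
square matrix is two-sided. Here `Q N = N` because `J N = 0`, and `Q g N = Q` because
`g N = 1 - Jᵀ (J g⁻¹ Jᵀ)⁻¹ J g⁻¹` while `Q Jᵀ = 0`. -/

theorem IsIdempotentElem.mul_add_one_sub_eq_one {α : Type*} [Ring α] {Q g N : α}
    (hQ : IsIdempotentElem Q) (hQN : Q * N = N) (hQgN : Q * g * N = Q) :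
    (Q * g * Q + (1 - Q)) * (N + (1 - Q)) = 1 := by
  have hQ1Q : Q * (1 - Q) = 0 := by rw [mul_sub, mul_one, hQ.eq, sub_self]
  have h1QN : (1 - Q) * N = 0 := by rw [sub_mul, one_mul, hQN, sub_self]
  rw [add_mul, mul_add, mul_add, mul_assoc (Q * g), hQN, hQgN, mul_assoc (Q * g), hQ1Q,
    mul_zero, h1QN, hQ.one_sub.eq]
  abel

namespace Matrix

variable {m n R : Type*} [Fintype m] [DecidableEq m] [Fintype n] [CommRing R]

theorem mul_nonsing_inv_mul_mul_self (A : Matrix m n R) (B : Matrix n m R)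
    (hAB : IsUnit (A * B).det) : B * (A * B)⁻¹ * A * B = B := by
  rw [Matrix.mul_assoc _ A, Matrix.mul_assoc B, nonsing_inv_mul _ hAB, Matrix.mul_one]

theorem isIdempotentElem_mul_nonsing_inv_mul (A : Matrix m n R) (B : Matrix n m R)
    (hAB : IsUnit (A * B).det) : IsIdempotentElem (B * (A * B)⁻¹ * A) := by
  rw [IsIdempotentElem, ← Matrix.mul_assoc, ← Matrix.mul_assoc (B * _ * A) B,
    mul_nonsing_inv_mul_mul_self A B hAB]

theorem one_sub_mul_nonsing_inv_mul_mul_self [DecidableEq n] (A : Matrix m n R)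
    (B : Matrix n m R) (hAB : IsUnit (A * B).det) : (1 - B * (A * B)⁻¹ * A) * B = 0 := by
  rw [Matrix.sub_mul, Matrix.one_mul, mul_nonsing_inv_mul_mul_self A B hAB, sub_self]

theorem mul_sub_mul_nonsing_inv_mul_eq_zero (A : Matrix m n R) (h : Matrix n n R)
    (B : Matrix n m R) (hAhB : IsUnit (A * h * B).det) :
    A * (h - h * B * (A * h * B)⁻¹ * A * h) = 0 := by
  simp only [Matrix.mul_sub, ← Matrix.mul_assoc]
  rw [mul_nonsing_inv _ hAhB, Matrix.one_mul, sub_self]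

end Matrix

theorem inv_QgQ_add_complement_general {n m : ℕ}
    (J : Matrix (Fin m) (Fin n) ℝ)
    (g : Matrix (Fin n) (Fin n) ℝ) (hg : g.PosDef)
    (hJJ : IsUnit (J * Jᵀ).det) (hJgJ : IsUnit (J * g⁻¹ * Jᵀ).det)
    (Q N : Matrix (Fin n) (Fin n) ℝ)
    (hQ : Q = 1 - Jᵀ * (J * Jᵀ)⁻¹ * J)
    (hN : N = g⁻¹ - g⁻¹ * Jᵀ * (J * g⁻¹ * Jᵀ)⁻¹ * J * g⁻¹) :
    IsUnit (Q * g * Q + (1 - Q)).det ∧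
      (Q * g * Q + (1 - Q))⁻¹ = N + (1 - Q) := by
  have hQ_idem : IsIdempotentElem Q :=
    hQ ▸ (isIdempotentElem_mul_nonsing_inv_mul J Jᵀ hJJ).one_sub
  have hJN : J * N = 0 := hN ▸ mul_sub_mul_nonsing_inv_mul_eq_zero J g⁻¹ Jᵀ hJgJ
  have hQJt : Q * Jᵀ = 0 := hQ ▸ one_sub_mul_nonsing_inv_mul_mul_self J Jᵀ hJJ
  have hQN : Q * N = N := by
    rw [hQ, Matrix.sub_mul, Matrix.one_mul, Matrix.mul_assoc _ J, hJN, Matrix.mul_zero, sub_zero]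
  have hgN : g * N = 1 - Jᵀ * ((J * g⁻¹ * Jᵀ)⁻¹ * J * g⁻¹) := by
    simp only [hN, Matrix.mul_sub, ← Matrix.mul_assoc]
    rw [mul_nonsing_inv g ((isUnit_iff_isUnit_det g).mp hg.isUnit)]
    simp only [Matrix.one_mul, Matrix.mul_assoc]
  have hQgN : Q * g * N = Q := by
    rw [Matrix.mul_assoc, hgN, Matrix.mul_sub, Matrix.mul_one, ← Matrix.mul_assoc, hQJt,
      Matrix.zero_mul, sub_zero]
  have key := hQ_idem.mul_add_one_sub_eq_one hQN hQgN
  exact ⟨isUnit_det_of_right_inverse key, inv_eq_right_inv key⟩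

/-- `Q g Q + (I − Q)` is invertible, with inverse `N + (I − Q)`. -/
theorem inv_QgQ_add_complement {n m : ℕ} (hm : 0 < m) (hmn : m < n)
    (J : Matrix (Fin m) (Fin n) ℝ) (hJ : J.rank = m)
    (g : Matrix (Fin n) (Fin n) ℝ) (hg : g.PosDef)
    (hJJ : IsUnit (J * Jᵀ).det) (hJgJ : IsUnit (J * g⁻¹ * Jᵀ).det)
    (Q N : Matrix (Fin n) (Fin n) ℝ)
    (hQ : Q = 1 - Jᵀ * (J * Jᵀ)⁻¹ * J)
    (hN : N = g⁻¹ - g⁻¹ * Jᵀ * (J * g⁻¹ * Jᵀ)⁻¹ * J * g⁻¹) :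
    IsUnit (Q * g * Q + (1 - Q)).det ∧
      (Q * g * Q + (1 - Q))⁻¹ = N + (1 - Q) :=
  inv_QgQ_add_complement_general J g hg hJJ hJgJ Q N hQ hN
end

section
/- Let k = n − m and let U_k ∈ ℝ^{n×k} be a matrix whose columns form an orthonormal basis of the null space of J. Then U_kᵀ M U_k = U_kᵀ g U_k, the k×k matrix U_kᵀ g U_k is invertible, and its inverse is (U_kᵀ g U_k)⁻¹ = U_kᵀ N U_k. -/
/-!
Write `X = Uᵀ g U` and `Y = Uᵀ N U`. Since `J U = 0`, the projection `Q` fixes `U`, giving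
`Uᵀ M U = X`. The matrix `X` is positive definite because `U` is injective. For the inverse,
`J N = 0` puts the range of `N` inside `ker J = range U`, on which `U Uᵀ` is the identity, so
`X Y = Uᵀ g N U`; and `g N = 1 - Jᵀ (J g⁻¹ Jᵀ)⁻¹ J g⁻¹`, whose `Jᵀ` term is killed by `Uᵀ`.
-/

open Matrix

namespace Matrix

section CommRing

variable {R : Type*} [CommRing R] {ι κ μ : Type*} [Fintype ι] [Fintype κ]

theorem range_mulVecLin_le_ker_iff {J : Matrix μ ι R} {U : Matrix ι κ R} :
    LinearMap.range U.mulVecLin ≤ LinearMap.ker J.mulVecLin ↔ J * U = 0 := by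
  classical
  rw [LinearMap.range_le_ker_iff, ← mulVecLin_mul, ← toLin'_apply',
    map_eq_zero_iff _ toLin'.injective]

theorem mul_transpose_mul_of_range_le [Fintype μ] [DecidableEq κ] {U : Matrix ι κ R}
    {N : Matrix ι μ R} (hU : Uᵀ * U = 1)
    (hN : LinearMap.range N.mulVecLin ≤ LinearMap.range U.mulVecLin) :
    U * (Uᵀ * N) = N := by
  rw [ext_iff_mulVec]
  intro v
  obtain ⟨c, hc⟩ := hN ⟨v, rfl⟩
  simp only [mulVecLin_apply] at hc
  calc (U * (Uᵀ * N)) *ᵥ v = U *ᵥ (Uᵀ *ᵥ (N *ᵥ v)) := by simp only [mulVec_mulVec]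
    _ = U *ᵥ ((Uᵀ * U) *ᵥ c) := by rw [← hc, mulVec_mulVec c]
    _ = N *ᵥ v := by rw [hU, one_mulVec, hc]

end CommRing

section Field

variable {K : Type*} [Field K] {ι μ : Type*} [Fintype ι] [Fintype μ] [DecidableEq ι]
  [DecidableEq μ]

noncomputable def constrainedInv (g : Matrix ι ι K) (J : Matrix μ ι K) : Matrix ι ι K :=
  g⁻¹ - g⁻¹ * Jᵀ * (J * g⁻¹ * Jᵀ)⁻¹ * J * g⁻¹

theorem mul_constrainedInv_eq_zero {g : Matrix ι ι K} {J : Matrix μ ι K}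
    (hJgJ : IsUnit (J * g⁻¹ * Jᵀ).det) : J * constrainedInv g J = 0 := by
  have hcancel : J * g⁻¹ * Jᵀ * (J * g⁻¹ * Jᵀ)⁻¹ = 1 := mul_nonsing_inv _ hJgJ
  calc J * constrainedInv g J
      = J * g⁻¹ - J * g⁻¹ * Jᵀ * (J * g⁻¹ * Jᵀ)⁻¹ * (J * g⁻¹) := by
        simp only [constrainedInv, Matrix.mul_sub, Matrix.mul_assoc]
    _ = 0 := by rw [hcancel, Matrix.one_mul, sub_self]

theorem mul_constrainedInv {g : Matrix ι ι K} (hg : IsUnit g.det) (J : Matrix μ ι K) :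
    g * constrainedInv g J = 1 - Jᵀ * ((J * g⁻¹ * Jᵀ)⁻¹ * J * g⁻¹) := by
  calc g * constrainedInv g J
      = g * g⁻¹ - g * g⁻¹ * (Jᵀ * ((J * g⁻¹ * Jᵀ)⁻¹ * J * g⁻¹)) := by
        simp only [constrainedInv, Matrix.mul_sub, Matrix.mul_assoc]
    _ = 1 - Jᵀ * ((J * g⁻¹ * Jᵀ)⁻¹ * J * g⁻¹) := by rw [mul_nonsing_inv _ hg, Matrix.one_mul]

end Field

theorem PosDef.transpose_mul_mul_of_transpose_mul_eq_one {ι κ : Type*} [Fintype ι] [Fintype κ]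
    [DecidableEq κ] {g : Matrix ι ι ℝ} (hg : g.PosDef) {U : Matrix ι κ ℝ} (hU : Uᵀ * U = 1) : (Uᵀ * g * U).PosDef := by
  have hinj : Function.Injective U.mulVec := Function.LeftInverse.injective (g := Uᵀ.mulVec)
    fun v => by rw [mulVec_mulVec, hU, one_mulVec]
  simpa only [conjTranspose_eq_transpose_of_trivial] using hg.conjTranspose_mul_mul_same hinj

end Matrix

theorem restricted_metric_inverse_general {n m : ℕ}
    (J : Matrix (Fin m) (Fin n) ℝ)
    (g : Matrix (Fin n) (Fin n) ℝ) (hg : g.PosDef)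
    (hJgJ : IsUnit (J * g⁻¹ * Jᵀ).det)
    (Q M N : Matrix (Fin n) (Fin n) ℝ)
    (hQ : Q = 1 - Jᵀ * (J * Jᵀ)⁻¹ * J)
    (hM : M = Q * g * Q)
    (hN : N = g⁻¹ - g⁻¹ * Jᵀ * (J * g⁻¹ * Jᵀ)⁻¹ * J * g⁻¹)
    (U : Matrix (Fin n) (Fin (n - m)) ℝ)
    (hUorth : Uᵀ * U = 1)
    (hUspan : LinearMap.range U.mulVecLin = LinearMap.ker J.mulVecLin) :
    Uᵀ * M * U = Uᵀ * g * U ∧ IsUnit (Uᵀ * g * U).det ∧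
      (Uᵀ * g * U)⁻¹ = Uᵀ * N * U := by
  have hJU : J * U = 0 := range_mulVecLin_le_ker_iff.mp hUspan.le
  have hUJ : Uᵀ * Jᵀ = 0 := by rw [← transpose_mul, hJU, transpose_zero]
  have hQU : Q * U = U := by
    rw [hQ, Matrix.sub_mul, Matrix.one_mul, Matrix.mul_assoc, hJU, Matrix.mul_zero, sub_zero]
  have hUQ : Uᵀ * Q = Uᵀ := by
    rw [hQ, Matrix.mul_sub, Matrix.mul_one, ← Matrix.mul_assoc, ← Matrix.mul_assoc, hUJ,
      Matrix.zero_mul, Matrix.zero_mul, sub_zero]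
  have hUUN : U * (Uᵀ * N) = N := by
    refine mul_transpose_mul_of_range_le hUorth (hUspan ▸ range_mulVecLin_le_ker_iff.mpr ?_)
    rw [hN]
    exact mul_constrainedInv_eq_zero hJgJ
  have hgN : g * N = 1 - Jᵀ * ((J * g⁻¹ * Jᵀ)⁻¹ * J * g⁻¹) := by
    rw [hN]
    exact mul_constrainedInv ((isUnit_iff_isUnit_det g).mp hg.isUnit) J
  refine ⟨?_, (isUnit_iff_isUnit_det _).mp
    (hg.transpose_mul_mul_of_transpose_mul_eq_one hUorth).isUnit, inv_eq_right_inv ?_⟩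
  · calc Uᵀ * M * U = Uᵀ * Q * g * (Q * U) := by simp only [hM, Matrix.mul_assoc]
      _ = Uᵀ * g * U := by rw [hUQ, hQU]
  · calc Uᵀ * g * U * (Uᵀ * N * U) = Uᵀ * (g * (U * (Uᵀ * N))) * U := by
          simp only [Matrix.mul_assoc]
      _ = Uᵀ * (g * N) * U := by rw [hUUN]
      _ = Uᵀ * U - Uᵀ * Jᵀ * ((J * g⁻¹ * Jᵀ)⁻¹ * J * g⁻¹) * U := by
          rw [hgN, Matrix.mul_sub, Matrix.mul_one, Matrix.sub_mul, Matrix.mul_assoc Uᵀ Jᵀ]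
      _ = 1 := by rw [hUorth, hUJ, Matrix.zero_mul, Matrix.zero_mul, sub_zero]

/-- If the columns of `U` form an orthonormal basis of the null space of `J`
(`k = n − m`), then `Uᵀ M U = Uᵀ g U`, the matrix `Uᵀ g U` is invertible, and
`(Uᵀ g U)⁻¹ = Uᵀ N U`. -/
theorem restricted_metric_inverse {n m : ℕ} (hm : 0 < m) (hmn : m < n)
    (J : Matrix (Fin m) (Fin n) ℝ) (hJ : J.rank = m)
    (g : Matrix (Fin n) (Fin n) ℝ) (hg : g.PosDef)
    (hJJ : IsUnit (J * Jᵀ).det) (hJgJ : IsUnit (J * g⁻¹ * Jᵀ).det)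
    (Q M N : Matrix (Fin n) (Fin n) ℝ)
    (hQ : Q = 1 - Jᵀ * (J * Jᵀ)⁻¹ * J)
    (hM : M = Q * g * Q)
    (hN : N = g⁻¹ - g⁻¹ * Jᵀ * (J * g⁻¹ * Jᵀ)⁻¹ * J * g⁻¹)
    (U : Matrix (Fin n) (Fin (n - m)) ℝ)
    (hUorth : Uᵀ * U = 1)
    (hUspan : LinearMap.range U.mulVecLin = LinearMap.ker J.mulVecLin) :
    Uᵀ * M * U = Uᵀ * g * U ∧ IsUnit (Uᵀ * g * U).det ∧
      (Uᵀ * g * U)⁻¹ = Uᵀ * N * U :=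
  restricted_metric_inverse_general J g hg hJgJ Q M N hQ hM hN U hUorth hUspan
end

section
/- Let c : ℝⁿ → ℝᵐ be twice continuously differentiable, let x, v : ℝ → ℝⁿ be differentiable curves, and let F : ℝ → ℝⁿ. Suppose that for all t the matrix Dc(x(t)) Dc(x(t))ᵀ is invertible and that v satisfies the constrained dynamics v'(t) = −F(t) − Dc(x(t))ᵀ λ(t), where λ(t) = (Dc(x(t)) Dc(x(t))ᵀ)⁻¹ ( D²c(x(t))[v(t), x'(t)] − Dc(x(t)) F(t) ). Then the function t ↦ Dc(x(t)) v(t) is constant; in particular Dc(x(t)) v(t) = Dc(x(0)) v(0) for all t, so the Lagrange-multiplier term keeps the velocity in the null space of the constraint Jacobian whenever it starts there. -/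
open Matrix

/-!
Write `A(t) = Dc(x(t))`. By the chain and product rules `(A v)' = A' v + A v'`, and `A' v` is
exactly the second-derivative term `D²c(x)[v, x']` inside `λ`. Substituting the dynamics,
`A v' = -A F - (A Aᵀ)(A Aᵀ)⁻¹ (D²c(x)[v, x'] - A F) = -D²c(x)[v, x']`,
so `A v` has zero derivative.
-/

theorem fderiv_clm_apply_const_apply {𝕜 E F G : Type*} [NontriviallyNormedField 𝕜]
    [NormedAddCommGroup E] [NormedSpace 𝕜 E] [NormedAddCommGroup F] [NormedSpace 𝕜 F]
    [NormedAddCommGroup G] [NormedSpace 𝕜 G] {c : E → F →L[𝕜] G} {y : E}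
    (hc : DifferentiableAt 𝕜 c y) (w : F) (h : E) :
    fderiv 𝕜 (fun z => c z w) y h = fderiv 𝕜 c y h w := by
  simp [fderiv_clm_apply hc (differentiableAt_const w)]

theorem hasDerivAt_fderiv_apply {𝕜 E F : Type*} [NontriviallyNormedField 𝕜]
    [NormedAddCommGroup E] [NormedSpace 𝕜 E] [NormedAddCommGroup F] [NormedSpace 𝕜 F]
    {c : E → F} {x v : 𝕜 → E} {t : 𝕜} (hc : DifferentiableAt 𝕜 (fderiv 𝕜 c) (x t))
    (hx : DifferentiableAt 𝕜 x t) (hv : DifferentiableAt 𝕜 v t) :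
    HasDerivAt (fun s => fderiv 𝕜 c (x s) (v s))
      (fderiv 𝕜 (fderiv 𝕜 c) (x t) (deriv x t) (v t) + fderiv 𝕜 c (x t) (deriv v t)) t :=
  (hc.hasFDerivAt.comp_hasDerivAt t hx.hasDerivAt).clm_apply hv.hasDerivAt

theorem mulVec_neg_sub_transpose_mulVec_inv_mulVec {R m n : Type*} [CommRing R]
    [Fintype m] [Fintype n] [DecidableEq m] (A : Matrix m n R) (hA : IsUnit (A * Aᵀ).det)
    (f : n → R) (b : m → R) :
    A *ᵥ (-f - Aᵀ *ᵥ ((A * Aᵀ)⁻¹ *ᵥ (b - A *ᵥ f))) = -b := by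
  rw [mulVec_sub, mulVec_neg, mulVec_mulVec, mulVec_mulVec, mul_nonsing_inv _ hA, one_mulVec]
  abel

/-- With the Lagrange multiplier
`λ(t) = (Dc(x(t)) Dc(x(t))ᵀ)⁻¹ (D²c(x(t))[v(t), x'(t)] − Dc(x(t)) F(t))`, the constrained
dynamics `v'(t) = −F(t) − Dc(x(t))ᵀ λ(t)` keeps `t ↦ Dc(x(t)) v(t)` constant:
`Dc(x(t)) v(t) = Dc(x(0)) v(0)` for all `t`. -/
theorem constrained_dynamics_preserves_Dcv {n m : ℕ}
    (c : (Fin n → ℝ) → (Fin m → ℝ)) (hc : ContDiff ℝ 2 c)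
    (x v : ℝ → Fin n → ℝ) (F : ℝ → Fin n → ℝ)
    (hx : Differentiable ℝ x) (hv : Differentiable ℝ v)
    (Dc : (Fin n → ℝ) → Matrix (Fin m) (Fin n) ℝ)
    (hDc : ∀ y : Fin n → ℝ,
      Dc y = LinearMap.toMatrix' (fderiv ℝ c y : (Fin n → ℝ) →ₗ[ℝ] (Fin m → ℝ)))
    (hinv : ∀ t : ℝ, IsUnit (Dc (x t) * (Dc (x t))ᵀ).det)
    (lam : ℝ → Fin m → ℝ)
    (hlam : ∀ t : ℝ, lam t = (Dc (x t) * (Dc (x t))ᵀ)⁻¹ *ᵥ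
      ((fderiv ℝ (fun y => fderiv ℝ c y (v t)) (x t)) (deriv x t) - Dc (x t) *ᵥ F t))
    (hdyn : ∀ t : ℝ, deriv v t = -F t - (Dc (x t))ᵀ *ᵥ lam t) :
    ∀ t : ℝ, Dc (x t) *ᵥ v t = Dc (x 0) *ᵥ v 0 := by
  have hDc_mulVec (y w : Fin n → ℝ) : Dc y *ᵥ w = fderiv ℝ c y w := by
    rw [hDc, LinearMap.toMatrix'_mulVec]
    rfl
  have hD2c : Differentiable ℝ (fderiv ℝ c) :=
    (hc.fderiv_right le_rfl).differentiable one_ne_zero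
  have hderiv (t : ℝ) : HasDerivAt (fun s => Dc (x s) *ᵥ v s) 0 t := by
    simp only [hDc_mulVec]
    refine (hasDerivAt_fderiv_apply (hD2c (x t)) (hx t) (hv t)).congr_deriv ?_
    rw [← hDc_mulVec, hdyn, hlam, mulVec_neg_sub_transpose_mulVec_inv_mulVec _ (hinv t),
      fderiv_clm_apply_const_apply (hD2c (x t)), add_neg_cancel]
  exact fun t => is_const_of_deriv_eq_zero (fun s => (hderiv s).differentiableAt)
    (fun s => (hderiv s).deriv) t 0
end

section
/- Let g map ℝⁿ to symmetric positive definite n×n matrices, A ∈ ℝ^{m×n} of full row rank, x_{1/3}, v_{1/3} ∈ ℝⁿ, h > 0, and let L be an invertible m×m matrix. Define T(x, v, ν) = ( x_{1/3} + h g(x_mid)⁻¹(v_mid − Aᵀν₁), v_{1/3} + (h/2) Dg(x_mid)[ g(x_mid)⁻¹(v_mid − Aᵀν₁), g(x_mid)⁻¹(v_mid − Aᵀν₁) ], ν₁ ) with x_mid = (x_{1/3} + x)/2, v_mid = (v_{1/3} + v)/2, and ν₁ = ν + (L Lᵀ)⁻¹ A g(x_mid)⁻¹(v_mid − Aᵀν).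 Suppose (x*, v*, ν*) is a fixed point of T and that A g(x_mid*)⁻¹ Aᵀ is invertible, where x_mid* = (x_{1/3} + x*)/2 and v_mid* = (v_{1/3} + v*)/2. Then ν* = (A g(x_mid*)⁻¹ Aᵀ)⁻¹ A g(x_mid*)⁻¹ v_mid*, x* = x_{1/3} + h W(x_mid*) v_mid*, and v* = v_{1/3} + (h/2) Dg(x_mid*)[ W(x_mid*) v_mid*, W(x_mid*) v_mid* ], where W(x) = g(x)⁻¹ − g(x)⁻¹Aᵀ(A g(x)⁻¹ Aᵀ)⁻¹A g(x)⁻¹; that is, the fixed point of the iteration is exactly the solution of the implicit midpoint equations x* = x_{1/3} + h ∂H̄₂/∂v(x_mid*, v_mid*) and v* = v_{1/3} − h ∂H̄₂/∂x(x_mid*, v_mid*) for the kinetic Hamiltonian H̄₂(x, v) = ½ vᵀ W(x) v. -/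
open Matrix

attribute [local instance] Matrix.normedAddCommGroup Matrix.normedSpace

/-- The fixed point `(x*, v*, ν*)` of the implicit-midpoint iteration map `T` solves
the implicit midpoint equations for the kinetic Hamiltonian `H̄₂(x, v) = ½ vᵀ W(x) v`:
`ν* = (A g(x_mid*)⁻¹ Aᵀ)⁻¹ A g(x_mid*)⁻¹ v_mid*`, `x* = x_{1/3} + h W(x_mid*) v_mid*`,
and `v* = v_{1/3} + (h/2) Dg(x_mid*)[W(x_mid*) v_mid*, W(x_mid*) v_mid*]`, where
`W(x) = g(x)⁻¹ − g(x)⁻¹ Aᵀ (A g(x)⁻¹ Aᵀ)⁻¹ A g(x)⁻¹`. -/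
theorem imm_fixed_point_solves_midpoint {n m : ℕ}
    (g : (Fin n → ℝ) → Matrix (Fin n) (Fin n) ℝ)
    (hgsmooth : ContDiff ℝ (⊤ : ℕ∞) g)
    (hgpd : ∀ x : Fin n → ℝ, (g x).PosDef)
    (Dgv : (Fin n → ℝ) → (Fin n → ℝ) → (Fin n → ℝ) → Fin n → ℝ)
    (hDgv : ∀ x u w : Fin n → ℝ,
      Dgv x u w = fun i => u ⬝ᵥ ((fderiv ℝ g x (Pi.single i 1)) *ᵥ w))
    (A : Matrix (Fin m) (Fin n) ℝ) (hA : A.rank = m)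
    (x13 v13 : Fin n → ℝ) (h : ℝ) (hh : 0 < h)
    (L : Matrix (Fin m) (Fin m) ℝ) (hL : IsUnit L.det)
    (W : (Fin n → ℝ) → Matrix (Fin n) (Fin n) ℝ)
    (hW : ∀ x : Fin n → ℝ,
      W x = (g x)⁻¹ - (g x)⁻¹ * Aᵀ * (A * (g x)⁻¹ * Aᵀ)⁻¹ * A * (g x)⁻¹)
    (nu1 : (Fin n → ℝ) → (Fin n → ℝ) → (Fin m → ℝ) → Fin m → ℝ)
    (hnu1 : ∀ (x v : Fin n → ℝ) (ν : Fin m → ℝ),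
      nu1 x v ν = ν + (L * Lᵀ)⁻¹ *ᵥ (A *ᵥ ((g ((1 / 2 : ℝ) • (x13 + x)))⁻¹ *ᵥ
        ((1 / 2 : ℝ) • (v13 + v) - Aᵀ *ᵥ ν))))
    (T : (Fin n → ℝ) × (Fin n → ℝ) × (Fin m → ℝ) →
      (Fin n → ℝ) × (Fin n → ℝ) × (Fin m → ℝ))
    (hT : ∀ (x v : Fin n → ℝ) (ν : Fin m → ℝ),
      T (x, v, ν) = (x13 + h • ((g ((1 / 2 : ℝ) • (x13 + x)))⁻¹ *ᵥ
          ((1 / 2 : ℝ) • (v13 + v) - Aᵀ *ᵥ nu1 x v ν)),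
        v13 + (h / 2) • Dgv ((1 / 2 : ℝ) • (x13 + x))
          ((g ((1 / 2 : ℝ) • (x13 + x)))⁻¹ *ᵥ
            ((1 / 2 : ℝ) • (v13 + v) - Aᵀ *ᵥ nu1 x v ν))
          ((g ((1 / 2 : ℝ) • (x13 + x)))⁻¹ *ᵥ
            ((1 / 2 : ℝ) • (v13 + v) - Aᵀ *ᵥ nu1 x v ν)),
        nu1 x v ν))
    (xs vs : Fin n → ℝ) (νs : Fin m → ℝ)
    (hfix : T (xs, vs, νs) = (xs, vs, νs))
    (hinv : IsUnit (A * (g ((1 / 2 : ℝ) • (x13 + xs)))⁻¹ * Aᵀ).det) :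
    νs = (A * (g ((1 / 2 : ℝ) • (x13 + xs)))⁻¹ * Aᵀ)⁻¹ *ᵥ
        (A *ᵥ ((g ((1 / 2 : ℝ) • (x13 + xs)))⁻¹ *ᵥ ((1 / 2 : ℝ) • (v13 + vs)))) ∧
      xs = x13 + h • (W ((1 / 2 : ℝ) • (x13 + xs)) *ᵥ ((1 / 2 : ℝ) • (v13 + vs))) ∧
      vs = v13 + (h / 2) • Dgv ((1 / 2 : ℝ) • (x13 + xs))
        (W ((1 / 2 : ℝ) • (x13 + xs)) *ᵥ ((1 / 2 : ℝ) • (v13 + vs)))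
        (W ((1 / 2 : ℝ) • (x13 + xs)) *ᵥ ((1 / 2 : ℝ) • (v13 + vs))) := by
  rw [hT] at hfix
  simp only [Prod.mk.injEq] at hfix
  obtain ⟨h1, h2, h3⟩ := hfix
  set xm := (1 / 2 : ℝ) • (x13 + xs) with hxm
  set vm := (1 / 2 : ℝ) • (v13 + vs) with hvm
  set M := (g xm)⁻¹ with hMdef
  have h3' := h3
  rw [h3] at h1 h2
  rw [hnu1] at h3'
  have hq : (L * Lᵀ)⁻¹ *ᵥ (A *ᵥ (M *ᵥ (vm - Aᵀ *ᵥ νs))) = 0 :=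
    add_eq_left.mp h3'
  have hdet : IsUnit (L * Lᵀ).det := by
    rw [Matrix.det_mul, Matrix.det_transpose]; exact hL.mul hL
  have hq0 : (A * M) *ᵥ (vm - Aᵀ *ᵥ νs) = 0 := by
    have h' := congrArg (fun y => (L * Lᵀ) *ᵥ y) hq
    simpa [Matrix.mulVec_mulVec, ← Matrix.mul_assoc,
      Matrix.mul_nonsing_inv _ hdet] using h'
  have hS : (A * M * Aᵀ) *ᵥ νs = (A * M) *ᵥ vm := by
    rw [Matrix.mulVec_sub, sub_eq_zero, Matrix.mulVec_mulVec] at hq0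
    exact hq0.symm
  have hnus : νs = (A * M * Aᵀ)⁻¹ *ᵥ (A *ᵥ (M *ᵥ vm)) := by
    have hc : (A * M * Aᵀ)⁻¹ *ᵥ ((A * M * Aᵀ) *ᵥ νs) = νs := by
      rw [Matrix.mulVec_mulVec, Matrix.nonsing_inv_mul _ hinv,
        Matrix.one_mulVec]
    rw [← hc, hS]
    simp [Matrix.mulVec_mulVec, Matrix.mul_assoc]
  have hkey : M *ᵥ (vm - Aᵀ *ᵥ νs) = W xm *ᵥ vm := by
    rw [hW, Matrix.sub_mulVec, Matrix.mulVec_sub]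
    congr 1
    rw [hnus]
    simp [Matrix.mulVec_mulVec, Matrix.mul_assoc]
    rfl
  refine ⟨hnus, ?_, ?_⟩
  · rw [← hkey]; exact h1.symm
  · rw [← hkey]; exact h2.symm
end
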